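/- arXiv:2101.03522 — 2 statements merged into one kernel-verified Lean document; each statement's English description precedes it below -/
import Mathlib

section
/- Let a, b, c ∈ ℝ with c ≠ 0, and let X = a·E₁₃ + b·E₂₃ + c·(E₂₁ − E₁₂), where Eᵢⱼ denotes the 3×3 real matrix whose only nonzero entry is a 1 in row i and column j. Then for every s ∈ ℝ the matrix exponential satisfies exp(s·X) = M(x(s), y(s), c·s), where x(s) = (b/c)(cos(c·s) − 1) + (a/c) sin(c·s) and y(s) = (b/c) sin(c·s) + (a/c)(1 − cos(c·s)). -/
/-!
The generator `X = a E₁₃ + b E₂₃ + c (E₂₁ - E₁₂)` satisfies `X³ = -c² X`, so `Y = X / c` satisfies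
`Y³ = -Y`. For such `Y`, `1 + Y²` and `-Y²` are complementary idempotents and `Y` acts as a square
root of `-1` on the second one, so `(z, r) ↦ r (1 + Y²) - (Re z) Y² + (Im z) Y` is an algebra
homomorphism `ℂ × ℝ → A`. It commutes with `exp`, and `exp (θ i, 0) = (cos θ + i sin θ, 1)` gives
Rodrigues' formula `exp (θ Y) = 1 + sin θ Y + (1 - cos θ) Y²`. Reading off the entries of
`1 + (sin (cs) / c) X + ((1 - cos (cs)) / c²) X²` gives `M(x(s), y(s), cs)`.
-/

/-- The matrix `M(x, y, θ)` realizing the element `(x, y, θ)` of `SE(2)`. -/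
noncomputable def M (x y θ : ℝ) : Matrix (Fin 3) (Fin 3) ℝ :=
  !![Real.cos θ, -Real.sin θ, x; Real.sin θ, Real.cos θ, y; 0, 0, 1]

/-- `E i j`: the 3×3 matrix whose unique nonzero entry is a 1 in row `i`, column `j`
(rows and columns indexed from 1 as `1, 2, 3` ↦ `0, 1, 2`). -/
def E (i j : Fin 3) : Matrix (Fin 3) (Fin 3) ℝ := Matrix.single i j 1

open Real

section Rodrigues

variable {A : Type*} [Ring A] [Algebra ℝ A] (Y : A) (hY : Y ^ 3 = -Y)

noncomputable def rodriguesAlgHom : ℂ × ℝ →ₐ[ℝ] A :=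
  AlgHom.ofLinearMap
    { toFun := fun p => p.2 • (1 + Y ^ 2) - p.1.re • Y ^ 2 + p.1.im • Y
      map_add' := fun p q => by
        simp only [Prod.fst_add, Prod.snd_add, Complex.add_re, Complex.add_im]
        module
      map_smul' := fun r p => by
        simp only [Prod.smul_fst, Prod.smul_snd, Complex.real_smul, Complex.mul_re,
          Complex.mul_im, Complex.ofReal_re, Complex.ofReal_im, smul_eq_mul, RingHom.id_apply]
        module }
    (by simp)
    (fun p q => by
      have h2 : Y * Y = Y ^ 2 := (pow_two Y).symm
      have h3 : Y * Y ^ 2 = -Y := by rw [← pow_succ', hY]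
      have h3' : Y ^ 2 * Y = -Y := by rw [← pow_succ, hY]
      have h4 : Y ^ 2 * Y ^ 2 = -Y ^ 2 := by
        rw [← pow_add, show 2 + 2 = 3 + 1 from rfl, pow_succ, hY, neg_mul, h2]
      simp only [LinearMap.coe_mk, AddHom.coe_mk, Prod.fst_mul, Prod.snd_mul, Complex.mul_re,
        Complex.mul_im, mul_add, add_mul, sub_mul, mul_sub, smul_mul_smul_comm, one_mul, mul_one,
        h2, h3, h3', h4]
      module)

theorem rodriguesAlgHom_apply (p : ℂ × ℝ) :
    rodriguesAlgHom Y hY p = p.2 • (1 + Y ^ 2) - p.1.re • Y ^ 2 + p.1.im • Y :=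
  rfl

end Rodrigues

section NormedAlgebra

variable {A : Type*} [NormedRing A] [NormedAlgebra ℝ A]

theorem exp_smul_of_pow_three_eq_neg {Y : A} (hY : Y ^ 3 = -Y) (θ : ℝ) :
    NormedSpace.exp (θ • Y) = 1 + sin θ • Y + (1 - cos θ) • Y ^ 2 := by
  have hcont : Continuous (rodriguesAlgHom Y hY) :=
    show Continuous fun p : ℂ × ℝ => p.2 • (1 + Y ^ 2) - p.1.re • Y ^ 2 + p.1.im • Y by fun_prop
  have hθ : θ • Y = rodriguesAlgHom Y hY (θ * Complex.I, 0) := by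
    simp [rodriguesAlgHom_apply]
  rw [hθ, ← NormedSpace.map_exp_of_mem_ball (𝕂 := ℝ) _ hcont _
    ((NormedSpace.expSeries_radius_eq_top ℝ (ℂ × ℝ)).symm ▸ edist_lt_top _ _)]
  simp only [rodriguesAlgHom_apply, Prod.snd_exp, NormedSpace.exp_zero, Prod.fst_exp,
    ← Complex.exp_eq_exp_ℂ, Complex.exp_ofReal_mul_I_re, Complex.exp_ofReal_mul_I_im]
  module

theorem exp_smul_of_pow_three_eq_neg_sq_smul {X : A} {c : ℝ} (hc : c ≠ 0)
    (hX : X ^ 3 = -c ^ 2 • X) (s : ℝ) :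
    NormedSpace.exp (s • X) = 1 + (sin (c * s) / c) • X + ((1 - cos (c * s)) / c ^ 2) • X ^ 2 := by
  have hY : (c⁻¹ • X) ^ 3 = -(c⁻¹ • X) := by
    rw [smul_pow, hX, smul_smul, ← neg_smul]
    field_simp
  rw [show s • X = (c * s) • c⁻¹ • X by rw [smul_smul]; field_simp,
    exp_smul_of_pow_three_eq_neg hY, smul_pow]
  module

end NormedAlgebra

def se2Generator (a b c : ℝ) : Matrix (Fin 3) (Fin 3) ℝ :=
  !![0, -c, a; c, 0, b; 0, 0, 0]

theorem smul_E_add_eq_se2Generator (a b c : ℝ) :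
    a • E 0 2 + b • E 1 2 + c • (E 1 0 - E 0 1) = se2Generator a b c := by
  ext i j
  fin_cases i <;> fin_cases j <;> simp [E, Matrix.single, se2Generator]

theorem se2Generator_sq (a b c : ℝ) :
    se2Generator a b c ^ 2 = !![-c ^ 2, 0, -c * b; 0, -c ^ 2, c * a; 0, 0, 0] := by
  rw [se2Generator, sq, Matrix.mul_fin_three]
  ring_nf

theorem se2Generator_pow_three (a b c : ℝ) :
    se2Generator a b c ^ 3 = -c ^ 2 • se2Generator a b c := by
  rw [pow_succ, se2Generator_sq, se2Generator, Matrix.mul_fin_three, Matrix.smul_of]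
  ext i j
  fin_cases i <;> fin_cases j <;> simp

/-- One-parameter subgroups of SE(2), case `c ≠ 0`:
`exp(s X) = M(x(s), y(s), c s)` with
`x(s) = (b/c)(cos(cs) − 1) + (a/c) sin(cs)`, `y(s) = (b/c) sin(cs) + (a/c)(1 − cos(cs))`. -/
theorem exp_rotation (a b c : ℝ) (hc : c ≠ 0) (s : ℝ) :
    NormedSpace.exp (s • (a • E 0 2 + b • E 1 2 + c • (E 1 0 - E 0 1))) =
      M (b / c * (Real.cos (c * s) - 1) + a / c * Real.sin (c * s))
        (b / c * Real.sin (c * s) + a / c * (1 - Real.cos (c * s))) (c * s) := by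
  -- `exp` only sees the topology, so any submultiplicative matrix norm may be used.
  let := Matrix.linftyOpNormedRing (n := Fin 3) (α := ℝ)
  let := Matrix.linftyOpNormedAlgebra (n := Fin 3) (α := ℝ) (R := ℝ)
  rw [smul_E_add_eq_se2Generator]
  refine (exp_smul_of_pow_three_eq_neg_sq_smul hc (se2Generator_pow_three a b c) s).trans ?_
  rw [se2Generator_sq]
  ext i j
  fin_cases i <;> fin_cases j <;>
    simp [M, se2Generator] <;> field_simp <;> ring
end

section
/- Let a, b, c ∈ ℝ with c ≠ 0, let X = a·E₁₃ + b·E₂₃ + c·(E₂₁ − E₁₂), and let x₀, y₀, θ₀ ∈ ℝ. Then for every s ∈ ℝ, exp(s·X) · M(x₀, y₀, θ₀) = M( (x₀ + b/c) cos(c·s) + (a/c − y₀) sin(c·s) − b/c, (y₀ − a/c) cos(c·s) + (b/c + x₀) sin(c·s) + a/c, θ₀ + c·s ). -/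
open NormedSpace
open Real hiding exp

theorem eq_exp_smul_of_hasDerivAt {𝕂 𝔸 : Type*} [RCLike 𝕂] [NormedRing 𝔸] [NormedAlgebra 𝕂 𝔸]
    [CompleteSpace 𝔸] {X : 𝔸} {γ : 𝕂 → 𝔸} (hγ : ∀ u, HasDerivAt γ (X * γ u) u) (hγ₀ : γ 0 = 1)
    (t : 𝕂) : γ t = exp (t • X) := by
  -- `u ↦ exp ((t - u) • X) * γ u` is constant, with values `γ t` at `u = t` and `exp (t • X)` at 0.
  have hderiv : ∀ u, HasDerivAt (fun u => exp ((t - u) • X) * γ u) 0 u := fun u => by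
    have hexp := (hasDerivAt_exp_smul_const X (t - u)).scomp u ((hasDerivAt_const u t).sub
      (hasDerivAt_id u))
    refine (hexp.mul (hγ u)).congr_deriv ?_
    simp [mul_assoc]
  simpa [hγ₀] using is_const_of_deriv_eq_zero (fun u => (hderiv u).differentiableAt)
    (fun u => (hderiv u).deriv) t 0

theorem M_mul (x y θ x' y' θ' : ℝ) :
    M x y θ * M x' y' θ' =
      M (x + cos θ * x' - sin θ * y') (y + sin θ * x' + cos θ * y') (θ + θ') := by
  ext i j
  fin_cases i <;> fin_cases j <;>
    simp [M, Matrix.mul_apply, Fin.sum_univ_succ, cos_add, sin_add] <;> ring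

theorem M_zero_zero_zero : M 0 0 0 = 1 := by
  ext i j
  fin_cases i <;> fin_cases j <;> simp [M]

def J : Matrix (Fin 3) (Fin 3) ℝ := E 1 0 - E 0 1

theorem smul_E_add_smul_E_add_smul_J (a b c : ℝ) :
    a • E 0 2 + b • E 1 2 + c • J = !![0, -c, a; c, 0, b; 0, 0, 0] := by
  ext i j
  fin_cases i <;> fin_cases j <;> simp [J, E, Matrix.single]

theorem J_eq : J = !![0, -1, 0; 1, 0, 0; 0, 0, 0] := by
  simpa using smul_E_add_smul_E_add_smul_J 0 0 1

theorem M_zero_zero_eq (θ : ℝ) :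
    M 0 0 θ =
      cos θ • !![1, 0, 0; 0, 1, 0; 0, 0, 0] + sin θ • J + !![0, 0, 0; 0, 0, 0; 0, 0, 1] := by
  ext i j
  fin_cases i <;> fin_cases j <;> simp [M, J_eq]

section MatrixNorm

attribute [local instance] Matrix.linftyOpNormedRing Matrix.linftyOpNormedAlgebra

theorem hasDerivAt_M_zero_zero (θ : ℝ) : HasDerivAt (M 0 0) (J * M 0 0 θ) θ := by
  have hJ : J * M 0 0 θ = -sin θ • !![1, 0, 0; 0, 1, 0; 0, 0, 0] + cos θ • J := by
    ext i j
    fin_cases i <;> fin_cases j <;> simp [M, J_eq, Matrix.mul_apply, Fin.sum_univ_succ]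
  rw [hJ, show M 0 0 = _ from funext M_zero_zero_eq]
  exact (((hasDerivAt_cos θ).smul_const _).add ((hasDerivAt_sin θ).smul_const J)).add_const _

theorem exp_smul_J (t : ℝ) : exp (t • J) = M 0 0 t :=
  (eq_exp_smul_of_hasDerivAt hasDerivAt_M_zero_zero M_zero_zero_zero t).symm

end MatrixNorm

theorem M_conj_smul_J (p q c : ℝ) :
    M p q 0 * (c • J) * M (-p) (-q) 0 = !![0, -c, c * q; c, 0, -(c * p); 0, 0, 0] := by
  ext i j
  fin_cases i <;> fin_cases j <;> simp [M, J_eq, Matrix.mul_apply, Fin.sum_univ_succ]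

theorem exp_conj_translation (p q : ℝ) (A : Matrix (Fin 3) (Fin 3) ℝ) :
    exp (M p q 0 * A * M (-p) (-q) 0) = M p q 0 * exp A * M (-p) (-q) 0 :=
  Matrix.exp_units_conj ⟨M p q 0, M (-p) (-q) 0, by simp [M_mul, M_zero_zero_zero],
    by simp [M_mul, M_zero_zero_zero]⟩ A

theorem smul_E_add_smul_E_add_smul_J_eq_conj {a b c : ℝ} (hc : c ≠ 0) (s : ℝ) :
    s • (a • E 0 2 + b • E 1 2 + c • J) =
      M (-b / c) (a / c) 0 * ((c * s) • J) * M (-(-b / c)) (-(a / c)) 0 := by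
  rw [smul_E_add_smul_E_add_smul_J, M_conj_smul_J]
  ext i j
  fin_cases i <;> fin_cases j <;> simp <;> field_simp

/-- Orbit of the one-parameter subgroup generated by
`X = a E₁₃ + b E₂₃ + c (E₂₁ − E₁₂)` (case `c ≠ 0`) through the point `(x₀, y₀, θ₀)`. -/
theorem orbit_rotation (a b c : ℝ) (hc : c ≠ 0) (x₀ y₀ θ₀ : ℝ) (s : ℝ) :
    NormedSpace.exp (s • (a • E 0 2 + b • E 1 2 + c • (E 1 0 - E 0 1))) * M x₀ y₀ θ₀ =
      M ((x₀ + b / c) * Real.cos (c * s) + (a / c - y₀) * Real.sin (c * s) - b / c)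
        ((y₀ - a / c) * Real.cos (c * s) + (b / c + x₀) * Real.sin (c * s) + a / c)
        (θ₀ + c * s) := by
  rw [← J, smul_E_add_smul_E_add_smul_J_eq_conj hc, exp_conj_translation, exp_smul_J]
  simp only [M_mul, cos_zero, sin_zero, zero_add, add_zero]
  congr 1 <;> ring
end
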